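/- If p : [t₀, t_f] → ℝ² is a cubic polynomial and q : [t₀, t_f] → ℝ² is any C² trajectory with the same position and velocity at t₀ and t_f, then ∫ ‖q̈‖² dt = ∫ ‖p̈‖² dt + ∫ ‖q̈ - p̈‖² dt. -/

import Mathlib

/-!
Write `p̈ t = t • a + b` and `e = q - p`. Since `p̈` is affine, two integrations by parts give
`∫ ⟪p̈, ë⟫ = [⟪p̈, ė⟫ - ⟪a, e⟫]`, which vanishes because `e` and `ė` vanish at both endpoints.
Expanding `‖q̈‖² = ‖p̈ + ë‖²` then leaves exactly the two squared norms.
-/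

open RealInnerProductSpace intervalIntegral

variable {E : Type*} [NormedAddCommGroup E]

section NormedSpace

variable [NormedSpace ℝ E]

theorem ContDiff.continuous_deriv_deriv {f : ℝ → E} (hf : ContDiff ℝ 2 f) :
    Continuous (deriv (deriv f)) :=
  (hf.deriv' (n := 1)).continuous_deriv le_rfl

theorem deriv_deriv_cubic (a b c d : E) :
    deriv (deriv fun t : ℝ => (t ^ 3 / 6) • a + (t ^ 2 / 2) • b + t • c + d) =
      fun t => t • a + b := by
  have hsq (t : ℝ) : HasDerivAt (fun t : ℝ => t ^ 2 / 2) t t := by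
    simpa using (hasDerivAt_pow 2 t).div_const 2
  have hcube (t : ℝ) : HasDerivAt (fun t : ℝ => t ^ 3 / 6) (t ^ 2 / 2) t :=
    ((hasDerivAt_pow 3 t).div_const 6).congr_deriv (by norm_num; ring)
  have hvel : deriv (fun t : ℝ => (t ^ 3 / 6) • a + (t ^ 2 / 2) • b + t • c + d) =
      fun t => (t ^ 2 / 2) • a + t • b + c := funext fun t =>
    ((((hcube t).smul_const a).add ((hsq t).smul_const b)).add
      ((hasDerivAt_id t).smul_const c)).add_const d |>.deriv.trans (by simp)
  rw [hvel]
  exact funext fun t => ((((hsq t).smul_const a).add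
    ((hasDerivAt_id t).smul_const b)).add_const c).deriv.trans (by simp)

end NormedSpace

variable [InnerProductSpace ℝ E]

theorem integral_inner_affine_sub_deriv_deriv_eq_zero {p q : ℝ → E}
    (hp : ContDiff ℝ 2 p) (hq : ContDiff ℝ 2 q) {t₀ t₁ : ℝ}
    (h₀ : q t₀ = p t₀) (hv₀ : deriv q t₀ = deriv p t₀)
    (h₁ : q t₁ = p t₁) (hv₁ : deriv q t₁ = deriv p t₁) (u v : E) :
    ∫ t in t₀..t₁, ⟪t • u + v, deriv (deriv q) t - deriv (deriv p) t⟫ = 0 := by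
  have hderiv {f : ℝ → E} (hf : ContDiff ℝ 2 f) (t : ℝ) :
      HasDerivAt f (deriv f t) t ∧ HasDerivAt (deriv f) (deriv (deriv f) t) t :=
    ⟨(hf.differentiable (by norm_num) t).hasDerivAt,
      ((hf.deriv' (n := 1)).differentiable one_ne_zero t).hasDerivAt⟩
  have haff (t : ℝ) : HasDerivAt (fun t : ℝ => t • u + v) u t := by
    simpa using ((hasDerivAt_id t).smul_const u).add_const v
  have hF (t : ℝ) : HasDerivAt (fun t => ⟪t • u + v, deriv q t - deriv p t⟫ - ⟪u, q t - p t⟫)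
      ⟪t • u + v, deriv (deriv q) t - deriv (deriv p) t⟫ t := by
    have h := ((haff t).inner ℝ ((hderiv hq t).2.sub (hderiv hp t).2)).sub
      ((hasDerivAt_const t u).inner ℝ ((hderiv hq t).1.sub (hderiv hp t).1))
    exact h.congr_deriv (by simp)
  have hcont : Continuous fun t : ℝ => ⟪t • u + v, deriv (deriv q) t - deriv (deriv p) t⟫ :=
    (by fun_prop : Continuous fun t : ℝ => t • u + v).inner
      (hq.continuous_deriv_deriv.sub hp.continuous_deriv_deriv)
  rw [integral_eq_sub_of_hasDerivAt (fun t _ => hF t) (hcont.intervalIntegrable t₀ t₁)]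
  simp [h₀, hv₀, h₁, hv₁]

theorem integral_norm_sq_eq_add_of_integral_inner_eq_zero {f g : ℝ → E}
    (hf : Continuous f) (hg : Continuous g) {t₀ t₁ : ℝ}
    (h : ∫ t in t₀..t₁, ⟪f t, g t - f t⟫ = 0) :
    ∫ t in t₀..t₁, ‖g t‖ ^ 2 = (∫ t in t₀..t₁, ‖f t‖ ^ 2) + ∫ t in t₀..t₁, ‖g t - f t‖ ^ 2 := by
  have hpyth (t : ℝ) : ‖g t‖ ^ 2 = ‖f t‖ ^ 2 + 2 * ⟪f t, g t - f t⟫ + ‖g t - f t‖ ^ 2 := by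
    rw [← norm_add_sq_real, add_sub_cancel]
  simp_rw [hpyth]
  rw [integral_add, integral_add, integral_const_mul, h, mul_zero, add_zero]
  all_goals exact Continuous.intervalIntegrable (by fun_prop) _ _

theorem stmt_2_general
    (t0 tf : ℝ)
    (p q : ℝ → EuclideanSpace ℝ (Fin 2))
    (a b c d : EuclideanSpace ℝ (Fin 2))
    (hp : ∀ t : ℝ, p t = (t ^ 3 / 6) • a + (t ^ 2 / 2) • b + t • c + d)
    (hq : ContDiff ℝ 2 q)
    (hbc0 : q t0 = p t0) (hbcv0 : deriv q t0 = deriv p t0)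
    (hbcf : q tf = p tf) (hbcvf : deriv q tf = deriv p tf) :
    (∫ t in t0..tf, ‖deriv (deriv q) t‖ ^ 2) =
      (∫ t in t0..tf, ‖deriv (deriv p) t‖ ^ 2) +
      ∫ t in t0..tf, ‖deriv (deriv q) t - deriv (deriv p) t‖ ^ 2 := by
  obtain rfl : p = fun t => (t ^ 3 / 6) • a + (t ^ 2 / 2) • b + t • c + d := funext hp
  have hpC : ContDiff ℝ 2 fun t : ℝ => (t ^ 3 / 6) • a + (t ^ 2 / 2) • b + t • c + d := by
    fun_prop
  refine integral_norm_sq_eq_add_of_integral_inner_eq_zero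
    hpC.continuous_deriv_deriv hq.continuous_deriv_deriv ?_
  simpa only [deriv_deriv_cubic] using
    integral_inner_affine_sub_deriv_deriv_eq_zero hpC hq hbc0 hbcv0 hbcf hbcvf a b

/-- Orthogonality (Pythagorean) identity for control energy:
if p is a cubic polynomial trajectory and q is any C² trajectory with the
same position and velocity at both endpoints, then
∫ ‖q̈‖² = ∫ ‖p̈‖² + ∫ ‖q̈ − p̈‖². -/
theorem stmt_2
    (t0 tf : ℝ) (ht : t0 < tf)
    (p q : ℝ → EuclideanSpace ℝ (Fin 2))
    (a b c d : EuclideanSpace ℝ (Fin 2))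
    (hp : ∀ t : ℝ, p t = (t ^ 3 / 6) • a + (t ^ 2 / 2) • b + t • c + d)
    (hq : ContDiff ℝ 2 q)
    (hbc0 : q t0 = p t0) (hbcv0 : deriv q t0 = deriv p t0)
    (hbcf : q tf = p tf) (hbcvf : deriv q tf = deriv p tf) :
    (∫ t in t0..tf, ‖deriv (deriv q) t‖ ^ 2) =
      (∫ t in t0..tf, ‖deriv (deriv p) t‖ ^ 2) +
      ∫ t in t0..tf, ‖deriv (deriv q) t - deriv (deriv p) t‖ ^ 2 :=
  stmt_2_general t0 tf p q a b c d hp hq hbc0 hbcv0 hbcf hbcvf
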